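/- arXiv:2409.09171 — 2 statements merged into one kernel-verified Lean document; each statement's English description precedes it below -/
import Mathlib

section
/- For every ultimately periodic trace π there exists an LTL formula id_π that is satisfied by π and by no other trace: π ⊨ id_π, and for every trace π′, if π′ ⊨ id_π then π′ = π. -/
/-- LTL formulae over a set `AP` of atomic propositions:
`⊥ | p | ¬φ | φ∨φ | Xφ | φ U φ`. -/
inductive LTLFormula (AP : Type) : Type
  | bot : LTLFormula AP
  | atom : AP → LTLFormula AP
  | neg : LTLFormula AP → LTLFormula AP
  | disj : LTLFormula AP → LTLFormula AP → LTLFormula AP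
  | next : LTLFormula AP → LTLFormula AP
  | untl : LTLFormula AP → LTLFormula AP → LTLFormula AP

/-- A trace is an infinite sequence of sets of atomic propositions. -/
abbrev Trace (AP : Type) : Type := ℕ → Set AP

/-- The suffix `π^i` of a trace. -/
def Trace.suffix {AP : Type} (π : Trace AP) (i : ℕ) : Trace AP := fun j => π (i + j)

/-- Satisfaction of an LTL formula by a trace. -/
def LTLFormula.sat {AP : Type} : LTLFormula AP → Trace AP → Prop
  | .bot, _ => False
  | .atom p, π => p ∈ π 0
  | .neg φ, π => ¬ LTLFormula.sat φ π
  | .disj φ ψ, π => LTLFormula.sat φ π ∨ LTLFormula.sat ψ π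
  | .next φ, π => LTLFormula.sat φ (π.suffix 1)
  | .untl φ ψ, π => ∃ i, LTLFormula.sat ψ (π.suffix i) ∧ ∀ j < i, LTLFormula.sat φ (π.suffix j)

/-- A Kripke structure: a finite state set (`Fin n`), a nonempty set of initial
states, a left-total transition relation, and a labeling function. -/
structure Kripke (AP : Type) where
  n : ℕ
  init : Set (Fin n)
  init_nonempty : init.Nonempty
  trans : Fin n → Fin n → Prop
  trans_total : ∀ s, ∃ s', trans s s'
  label : Fin n → Set AP

/-- The traces of a Kripke structure. -/
def Kripke.traces {AP : Type} (M : Kripke AP) : Set (Trace AP) :=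
  {π | ∃ ρ : ℕ → Fin M.n, ρ 0 ∈ M.init ∧ (∀ i, M.trans (ρ i) (ρ (i + 1))) ∧
        ∀ i, π i = M.label (ρ i)}

/-- `M ⊨ φ` : every trace of `M` satisfies `φ`. -/
def Kripke.sat {AP : Type} (M : Kripke AP) (φ : LTLFormula AP) : Prop :=
  ∀ π ∈ M.traces, φ.sat π

/-- `M ⊨ X` : `M` satisfies every formula in `X`. -/
def Kripke.satSet {AP : Type} (M : Kripke AP) (X : Set (LTLFormula AP)) : Prop :=
  ∀ φ ∈ X, M.sat φ

/-- The consequence operator of LTL: `ψ ∈ CnLTL AP X` iff every Kripke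
structure satisfying all of `X` satisfies `ψ`. -/
def CnLTL (AP : Type) (X : Set (LTLFormula AP)) : Set (LTLFormula AP) :=
  {ψ | ∀ M : Kripke AP, M.satSet X → M.sat ψ}

/-- The infinite word `ρ σ^ω` determined by a finite prefix `ρ` and a nonempty
finite period `σ`. -/
def extendPer {α : Type} (ρ σ : List α) (hσ : σ ≠ []) : ℕ → α := fun i =>
  if h : i < ρ.length then ρ.get ⟨i, h⟩
  else σ.get ⟨(i - ρ.length) % σ.length, Nat.mod_lt _ (List.length_pos_iff.mpr hσ)⟩

/-- An infinite word is ultimately periodic if it equals `ρ σ^ω` for finite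
words `ρ, σ` with `σ` nonempty. -/
def UltPeriodic {α : Type} (w : ℕ → α) : Prop :=
  ∃ (ρ σ : List α) (hσ : σ ≠ []), w = extendPer ρ σ hσ

/-!
A trace `ρ σ^ω` is determined by its first `|ρ| + |σ|` letters together with the fact that from
position `|ρ|` on it has period `|σ|`: by strong induction, two traces with both properties agree
everywhere. Over a finite `AP` both properties are LTL-expressible: a letter is pinned down by a
conjunction of literals, shifted by `X^i`, and the period by `X^|ρ| G ⋀ p, (p ↔ X^|σ| p)`.
-/

theorem Trace.suffix_apply {AP : Type} (π : Trace AP) (i j : ℕ) : π.suffix i j = π (i + j) := rfl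

theorem Trace.suffix_zero {AP : Type} (π : Trace AP) : π.suffix 0 = π := by
  funext j; simp [Trace.suffix]

theorem Trace.suffix_suffix {AP : Type} (π : Trace AP) (a b : ℕ) :
    (π.suffix a).suffix b = π.suffix (a + b) := by
  funext j; simp [Trace.suffix, Nat.add_assoc]

theorem extendPer_add_length {α : Type} (ρ σ : List α) (hσ : σ ≠ []) {j : ℕ}
    (hj : ρ.length ≤ j) : extendPer ρ σ hσ (j + σ.length) = extendPer ρ σ hσ j := by
  have hidx : (j + σ.length - ρ.length) % σ.length = (j - ρ.length) % σ.length := by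
    rw [Nat.sub_add_comm hj, Nat.add_mod_right]
  simp only [extendPer, dif_neg (show ¬ j + σ.length < ρ.length by omega),
    dif_neg (show ¬ j < ρ.length by omega), hidx]

theorem UltPeriodic.exists_period {α : Type} {w : ℕ → α} (hw : UltPeriodic w) :
    ∃ m k, 0 < k ∧ ∀ j, m ≤ j → w (j + k) = w j := by
  obtain ⟨ρ, σ, hσ, rfl⟩ := hw
  exact ⟨ρ.length, σ.length, List.length_pos_iff.mpr hσ,
    fun j hj => extendPer_add_length ρ σ hσ hj⟩

theorem eq_of_agree_of_period {α : Type} {w w' : ℕ → α} {m k : ℕ} (hk : 0 < k)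
    (hw : ∀ j, m ≤ j → w (j + k) = w j) (hw' : ∀ j, m ≤ j → w' (j + k) = w' j)
    (hagree : ∀ i < m + k, w i = w' i) : w = w' := by
  funext n
  induction n using Nat.strong_induction_on with
  | _ n ih =>
    by_cases hn : n < m + k
    · exact hagree n hn
    · obtain ⟨j, rfl⟩ : ∃ j, n = j + k := ⟨n - k, by omega⟩
      rw [hw j (by omega), hw' j (by omega), ih j (by omega)]

namespace LTLFormula

variable {AP : Type}

def top : LTLFormula AP := .neg .bot

def conj (φ ψ : LTLFormula AP) : LTLFormula AP := .neg (.disj (.neg φ) (.neg ψ))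

def impl (φ ψ : LTLFormula AP) : LTLFormula AP := .disj (.neg φ) ψ

def iff (φ ψ : LTLFormula AP) : LTLFormula AP := conj (impl φ ψ) (impl ψ φ)

def always (φ : LTLFormula AP) : LTLFormula AP := .neg (.untl top (.neg φ))

def nextPow : ℕ → LTLFormula AP → LTLFormula AP
  | 0, φ => φ
  | n + 1, φ => .next (nextPow n φ)

def bigConj : List (LTLFormula AP) → LTLFormula AP
  | [] => top
  | φ :: l => conj φ (bigConj l)

variable {φ ψ : LTLFormula AP} {π : Trace AP}

theorem sat_top : (top : LTLFormula AP).sat π := by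
  simp [top, sat]

theorem sat_conj : (conj φ ψ).sat π ↔ φ.sat π ∧ ψ.sat π := by
  simp only [conj, sat, not_or, not_not]

theorem sat_impl : (impl φ ψ).sat π ↔ (φ.sat π → ψ.sat π) := by
  simp only [impl, sat]; tauto

theorem sat_iff : (iff φ ψ).sat π ↔ (φ.sat π ↔ ψ.sat π) := by
  simp only [iff, sat_conj, sat_impl]; tauto

theorem sat_always : (always φ).sat π ↔ ∀ i, φ.sat (π.suffix i) := by
  simp only [always, sat]
  exact ⟨fun h i => by_contra fun hi => h ⟨i, hi, fun _ _ => sat_top⟩,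
    fun h ⟨i, hi, _⟩ => hi (h i)⟩

theorem sat_nextPow {n : ℕ} : (nextPow n φ).sat π ↔ φ.sat (π.suffix n) := by
  induction n generalizing π with
  | zero => rw [nextPow, Trace.suffix_zero]
  | succ n ih =>
    change (nextPow n φ).sat (π.suffix 1) ↔ _
    rw [ih, Trace.suffix_suffix, Nat.add_comm]

theorem sat_bigConj {l : List (LTLFormula AP)} : (bigConj l).sat π ↔ ∀ φ ∈ l, φ.sat π := by
  induction l with
  | nil => simpa [bigConj] using sat_top
  | cons φ l ih => simp [bigConj, sat_conj, ih]

section Fintype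

variable [Fintype AP]

open Classical in
noncomputable def letter (s : Set AP) : LTLFormula AP :=
  bigConj (Finset.univ.toList.map fun p => if p ∈ s then .atom p else .neg (.atom p))

theorem sat_letter {s : Set AP} : (letter s).sat π ↔ π 0 = s := by
  classical
  simp only [letter, sat_bigConj, List.forall_mem_map, Finset.mem_toList, Finset.mem_univ,
    forall_const, Set.ext_iff]
  refine forall_congr' fun p => ?_
  by_cases hp : p ∈ s <;> simp [hp, sat]

noncomputable def prefixOf (w : Trace AP) (n : ℕ) : LTLFormula AP :=
  bigConj ((List.range n).map fun i => nextPow i (letter (w i)))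

theorem sat_prefixOf {w : Trace AP} {n : ℕ} : (prefixOf w n).sat π ↔ ∀ i < n, π i = w i := by
  simp only [prefixOf, sat_bigConj, List.forall_mem_map, List.mem_range, sat_nextPow, sat_letter,
    Trace.suffix_apply, Nat.add_zero]

noncomputable def shiftEq (k : ℕ) : LTLFormula AP :=
  bigConj (Finset.univ.toList.map fun p => iff (atom p) (nextPow k (atom p)))

theorem sat_shiftEq {k : ℕ} : (shiftEq k).sat π ↔ π k = π 0 := by
  simp only [shiftEq, sat_bigConj, List.forall_mem_map, Finset.mem_toList, Finset.mem_univ,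
    forall_const, sat_iff, sat_nextPow, Set.ext_iff]
  exact forall_congr' fun p => by simp [sat, Trace.suffix_apply, Iff.comm]

noncomputable def identifying (w : Trace AP) (m k : ℕ) : LTLFormula AP :=
  conj (prefixOf w (m + k)) (nextPow m (always (shiftEq k)))

theorem sat_identifying {w : Trace AP} {m k : ℕ} :
    (identifying w m k).sat π ↔
      (∀ i < m + k, π i = w i) ∧ ∀ j, m ≤ j → π (j + k) = π j := by
  simp only [identifying, sat_conj, sat_prefixOf, sat_nextPow, sat_always, sat_shiftEq,
    Trace.suffix_suffix, Trace.suffix_apply, Nat.add_zero]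
  refine and_congr_right fun _ => ⟨fun h j hj => ?_, fun h i => ?_⟩
  · obtain ⟨i, rfl⟩ := Nat.exists_eq_add_of_le hj
    exact h i
  · exact h (m + i) (Nat.le_add_right m i)

end Fintype

end LTLFormula

theorem exists_identifying_formula_general (AP : Type) [Fintype AP]
    (π : Trace AP) (hπ : UltPeriodic π) :
    ∃ idf : LTLFormula AP, idf.sat π ∧ ∀ π' : Trace AP, idf.sat π' → π' = π := by
  obtain ⟨m, k, hk, hper⟩ := hπ.exists_period
  refine ⟨LTLFormula.identifying π m k, LTLFormula.sat_identifying.mpr ⟨fun _ _ => rfl, hper⟩,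
    fun π' hπ' => ?_⟩
  obtain ⟨hagree, hper'⟩ := LTLFormula.sat_identifying.mp hπ'
  exact eq_of_agree_of_period hk hper' hper hagree

/-- every ultimately periodic trace `π` has an identifying LTL
formula, satisfied by `π` and by no other trace. -/
theorem exists_identifying_formula (AP : Type) [Fintype AP] [Nonempty AP]
    (π : Trace AP) (hπ : UltPeriodic π) :
    ∃ idf : LTLFormula AP, idf.sat π ∧ ∀ π' : Trace AP, idf.sat π' → π' = π :=
  exists_identifying_formula_general AP π hπ
end

section
/- The map upCCT : UP → CCT_LTL given by upCCT(π) = {φ ∈ Fm_LTL | π ⊨ φ} is a well-defined bijection from the set of ultimately periodic traces onto the set of complete consistent theories of LTL: for every π ∈ UP, upCCT(π) is a complete consistent theory; upCCT is injective; and every complete consistent LTL theory equals upCCT(π) for some π ∈ UP. -/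
/-- The set of formulae satisfied by a trace. -/
def upCCT {AP : Type} (π : Trace AP) : Set (LTLFormula AP) := {φ | φ.sat π}

/-- The complete consistent theories of LTL. -/
def CCT_LTL (AP : Type) : Set (Set (LTLFormula AP)) :=
  {K | CnLTL AP K = K ∧ K ≠ Set.univ ∧ ∀ φ, φ ∈ K ∨ LTLFormula.neg φ ∈ K}

/-!
An ultimately periodic trace `ρσ^ω` is the only trace of a lasso-shaped Kripke structure, so
its theory is closed under consequence; it is complete and consistent since a single trace
decides every formula, and it determines the trace through the formulae `Xⁱ p`. Conversely, a
consistent theory `K` has a Kripke model `M`. Any run of `M` revisits some state, and looping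
back at that repetition yields an ultimately periodic trace `π` of `M`; then
`K ⊆ upCCT π`, and completeness of `K` forces equality.
-/

variable {AP : Type}

namespace Trace

lemma suffix_zero_s8 (π : Trace AP) : π.suffix 0 = π :=
  funext fun j => congrArg π (Nat.zero_add j)

lemma suffix_suffix_s8 (π : Trace AP) (i j : ℕ) : (π.suffix i).suffix j = π.suffix (i + j) :=
  funext fun k => congrArg π (Nat.add_assoc i j k).symm

end Trace

namespace LTLFormula

def nextIter : ℕ → LTLFormula AP → LTLFormula AP
  | 0, φ => φ
  | i + 1, φ => .next (nextIter i φ)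

lemma sat_nextIter (i : ℕ) (φ : LTLFormula AP) (π : Trace AP) :
    (nextIter i φ).sat π ↔ φ.sat (π.suffix i) := by
  induction i generalizing π with
  | zero => rw [nextIter, Trace.suffix_zero_s8]
  | succ i ih =>
    change (nextIter i φ).sat (π.suffix 1) ↔ _
    rw [ih, Trace.suffix_suffix_s8, Nat.add_comm]

end LTLFormula

lemma upCCT_injective : Function.Injective (upCCT (AP := AP)) := by
  intro π π' h
  funext i
  ext p
  have := Set.ext_iff.mp h (.nextIter i (.atom p))
  simpa [upCCT, LTLFormula.sat_nextIter, LTLFormula.sat, Trace.suffix] using this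

lemma subset_CnLTL (X : Set (LTLFormula AP)) : X ⊆ CnLTL AP X :=
  fun _ hψ _ hM => hM _ hψ

lemma CnLTL_upCCT_of_traces_eq_singleton {M : Kripke AP} {π : Trace AP}
    (hM : M.traces = {π}) : CnLTL AP (upCCT π) = upCCT π := by
  refine (Set.Subset.antisymm (fun ψ hψ => ?_) (subset_CnLTL _))
  have hMπ : M.satSet (upCCT π) := by
    intro φ hφ π' hπ'
    rw [hM, Set.mem_singleton_iff] at hπ'
    exact hπ' ▸ hφ
  exact hψ M hMπ π (hM ▸ rfl)

lemma exists_model_of_CnLTL_ne_univ {K : Set (LTLFormula AP)} (hK : CnLTL AP K ≠ Set.univ) :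
    ∃ M : Kripke AP, M.satSet K := by
  by_contra! h
  exact hK (Set.eq_univ_of_forall fun ψ M hM => absurd hM (h M))

lemma eq_upCCT_of_subset {K : Set (LTLFormula AP)} {π : Trace AP}
    (hcomp : ∀ φ, φ ∈ K ∨ LTLFormula.neg φ ∈ K) (hK : K ⊆ upCCT π) : K = upCCT π :=
  Set.Subset.antisymm hK fun φ hφ => (hcomp φ).resolve_right fun hneg => hK hneg hφ

section Lasso

/-! The lasso with a stem of length `P` and a loop of length `Q` on the states `0, …, P + Q - 1`:
`lassoNext` is its successor function and `lassoIdx P Q k` the state reached after `k` steps. -/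

def lassoNext (P Q s : ℕ) : ℕ := if s + 1 < P + Q then s + 1 else P

def lassoIdx (P Q k : ℕ) : ℕ := if k < P then k else P + (k - P) % Q

variable {P Q : ℕ}

lemma lassoNext_lt (hQ : 0 < Q) (s : ℕ) : lassoNext P Q s < P + Q := by
  unfold lassoNext
  split <;> omega

lemma lassoIdx_of_lt {k : ℕ} (hk : k < P) : lassoIdx P Q k = k := if_pos hk

lemma lassoIdx_of_le {k : ℕ} (hk : P ≤ k) : lassoIdx P Q k = P + (k - P) % Q :=
  if_neg (Nat.not_lt.mpr hk)

lemma lassoIdx_zero (P Q : ℕ) : lassoIdx P Q 0 = 0 := by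
  simp [lassoIdx]

lemma lassoIdx_lt (hQ : 0 < Q) (k : ℕ) : lassoIdx P Q k < P + Q := by
  have := Nat.mod_lt (k - P) hQ
  unfold lassoIdx
  split <;> omega

lemma lassoIdx_succ (hQ : 0 < Q) (k : ℕ) :
    lassoIdx P Q (k + 1) = lassoNext P Q (lassoIdx P Q k) := by
  have hmod := Nat.mod_lt (k - P) hQ
  rcases Nat.lt_or_ge k P with hk | hk
  · rw [lassoIdx_of_lt hk, lassoNext, if_pos (by omega)]
    rcases Nat.lt_or_ge (k + 1) P with hk' | hk'
    · exact lassoIdx_of_lt hk'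
    · rw [lassoIdx_of_le hk', show k + 1 - P = 0 by omega, Nat.zero_mod]
      omega
  · rw [lassoIdx_of_le hk, lassoIdx_of_le (by omega), lassoNext,
      show k + 1 - P = k - P + 1 by omega, ← Nat.mod_add_mod]
    by_cases hwrap : (k - P) % Q + 1 < Q
    · rw [Nat.mod_eq_of_lt hwrap, if_pos (by omega)]
      omega
    · rw [show (k - P) % Q + 1 = Q by omega, Nat.mod_self, if_neg (by omega)]
      rfl

lemma extendPer_comp_lassoIdx {α : Type} (ρ σ : List α) (hσ : σ ≠ []) :
    extendPer ρ σ hσ ∘ lassoIdx ρ.length σ.length = extendPer ρ σ hσ := by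
  funext k
  by_cases hk : k < ρ.length
  · simp [lassoIdx_of_lt hk]
  · simp [lassoIdx_of_le (Nat.le_of_not_lt hk), extendPer, hk]

lemma ultPeriodic_comp_lassoIdx {α : Type} (f : ℕ → α) (P : ℕ) (hQ : 0 < Q) :
    UltPeriodic (f ∘ lassoIdx P Q) := by
  have hσ : (List.range Q).map (fun k => f (P + k)) ≠ [] :=
    List.ne_nil_of_length_pos (by simpa using hQ)
  refine ⟨(List.range P).map f, _, hσ, funext fun k => ?_⟩
  by_cases hk : k < P
  · simp [lassoIdx_of_lt hk, extendPer, hk]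
  · simp [lassoIdx_of_le (Nat.le_of_not_lt hk), extendPer, hk]

end Lasso

namespace Kripke

def IsRun (M : Kripke AP) (r : ℕ → Fin M.n) : Prop :=
  r 0 ∈ M.init ∧ ∀ i, M.trans (r i) (r (i + 1))

lemma label_comp_mem_traces {M : Kripke AP} {r : ℕ → Fin M.n} (hr : M.IsRun r) :
    M.label ∘ r ∈ M.traces :=
  ⟨r, hr.1, hr.2, fun _ => rfl⟩

lemma exists_isRun (M : Kripke AP) : ∃ r, M.IsRun r := by
  obtain ⟨s₀, hs₀⟩ := M.init_nonempty
  choose next hnext using M.trans_total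
  refine ⟨fun k => next^[k] s₀, hs₀, fun i => ?_⟩
  change M.trans (next^[i] s₀) (next^[i + 1] s₀)
  rw [Function.iterate_succ_apply']
  exact hnext _

lemma IsRun.comp_lassoIdx {M : Kripke AP} {r : ℕ → Fin M.n} (hr : M.IsRun r) {P Q : ℕ}
    (hQ : 0 < Q) (hloop : r (P + Q) = r P) : M.IsRun (r ∘ lassoIdx P Q) := by
  refine ⟨by simpa [lassoIdx_zero] using hr.1, fun i => ?_⟩
  simp only [Function.comp_apply, lassoIdx_succ hQ, lassoNext]
  split_ifs with h
  · exact hr.2 _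
  · rw [← hloop, show P + Q = lassoIdx P Q i + 1 by have := lassoIdx_lt (P := P) hQ i; omega]
    exact hr.2 _

lemma exists_ultPeriodic_mem_traces (M : Kripke AP) : ∃ π ∈ M.traces, UltPeriodic π := by
  obtain ⟨r, hr⟩ := M.exists_isRun
  obtain ⟨a, b, hab, hrab⟩ := Finite.exists_ne_map_eq_of_infinite r
  obtain ⟨P, Q, hQ, hloop⟩ : ∃ P Q, 0 < Q ∧ r (P + Q) = r P := by
    rcases Nat.lt_or_gt_of_ne hab with h | h
    · exact ⟨a, b - a, by omega, by rw [Nat.add_sub_cancel' h.le, hrab]⟩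
    · exact ⟨b, a - b, by omega, by rw [Nat.add_sub_cancel' h.le, hrab]⟩
  exact ⟨_, label_comp_mem_traces (hr.comp_lassoIdx hQ hloop),
    ultPeriodic_comp_lassoIdx (M.label ∘ r) P hQ⟩

end Kripke

def lassoKripke (w : Trace AP) (P Q : ℕ) (hQ : 0 < Q) : Kripke AP where
  n := P + Q
  init := {⟨0, by omega⟩}
  init_nonempty := Set.singleton_nonempty _
  trans a b := (b : ℕ) = lassoNext P Q a
  trans_total a := ⟨⟨lassoNext P Q a, lassoNext_lt hQ a⟩, rfl⟩
  label s := w s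

lemma lassoKripke_traces (w : Trace AP) {P Q : ℕ} (hQ : 0 < Q) :
    (lassoKripke w P Q hQ).traces = {w ∘ lassoIdx P Q} := by
  ext π
  constructor
  · rintro ⟨r, hr0, hstep, hπ⟩
    have hr : ∀ k, (r k : ℕ) = lassoIdx P Q k := by
      intro k
      induction k with
      | zero => rw [lassoIdx_zero]; exact congrArg Fin.val hr0
      | succ k ih => rw [lassoIdx_succ hQ, ← ih]; exact hstep k
    exact funext fun k => (hπ k).trans (congrArg w (hr k))
  · rintro rfl
    let r : ℕ → Fin (P + Q) := fun k => ⟨lassoIdx P Q k, lassoIdx_lt hQ k⟩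
    have hr : (lassoKripke w P Q hQ).IsRun r :=
      ⟨Fin.ext (lassoIdx_zero P Q), fun k => lassoIdx_succ hQ k⟩
    exact Kripke.label_comp_mem_traces hr

lemma exists_kripke_traces_eq_singleton {π : Trace AP} (hπ : UltPeriodic π) :
    ∃ M : Kripke AP, M.traces = {π} := by
  obtain ⟨ρ, σ, hσ, rfl⟩ := hπ
  refine ⟨lassoKripke (extendPer ρ σ hσ) ρ.length σ.length (List.length_pos_iff.mpr hσ), ?_⟩
  rw [lassoKripke_traces, extendPer_comp_lassoIdx]

lemma upCCT_mem_CCT_LTL {π : Trace AP} (hπ : UltPeriodic π) : upCCT π ∈ CCT_LTL AP := by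
  obtain ⟨M, hM⟩ := exists_kripke_traces_eq_singleton hπ
  exact ⟨CnLTL_upCCT_of_traces_eq_singleton hM,
    fun h => Set.eq_univ_iff_forall.mp h LTLFormula.bot, fun φ => em (φ.sat π)⟩

lemma exists_ultPeriodic_eq_upCCT {K : Set (LTLFormula AP)} (hK : K ∈ CCT_LTL AP) :
    ∃ π : Trace AP, UltPeriodic π ∧ K = upCCT π := by
  obtain ⟨hCn, hcons, hcomp⟩ := hK
  obtain ⟨M, hMK⟩ := exists_model_of_CnLTL_ne_univ (hCn.symm ▸ hcons)
  obtain ⟨π, hπM, hπ⟩ := M.exists_ultPeriodic_mem_traces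
  exact ⟨π, hπ, eq_upCCT_of_subset hcomp fun φ hφ => hMK φ hφ π hπM⟩

theorem upCCT_bijection_general (AP : Type) :
    (∀ π : Trace AP, UltPeriodic π → upCCT π ∈ CCT_LTL AP) ∧
    (∀ π π' : Trace AP, UltPeriodic π → UltPeriodic π' →
        upCCT π = upCCT π' → π = π') ∧
    (∀ K ∈ CCT_LTL AP, ∃ π : Trace AP, UltPeriodic π ∧ K = upCCT π) :=
  ⟨fun _ => upCCT_mem_CCT_LTL, fun _ _ _ _ h => upCCT_injective h,
    fun _ => exists_ultPeriodic_eq_upCCT⟩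

/-- `upCCT(π) = {φ | π ⊨ φ}` is a well-defined bijection between
ultimately periodic traces and complete consistent LTL theories. -/
theorem upCCT_bijection (AP : Type) [Fintype AP] [Nonempty AP] :
    (∀ π : Trace AP, UltPeriodic π → upCCT π ∈ CCT_LTL AP) ∧
    (∀ π π' : Trace AP, UltPeriodic π → UltPeriodic π' →
        upCCT π = upCCT π' → π = π') ∧
    (∀ K ∈ CCT_LTL AP, ∃ π : Trace AP, UltPeriodic π ∧ K = upCCT π) :=
  upCCT_bijection_general AP
end
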